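/- If the value φ^p is symmetric (i.e., φ^p_i(v) = φ^p_j(v) for every coalitional game v on N and all players i, j that are equivalent in v, where i, j are equivalent if v(S∪{i}) = v(S∪{j}) for all S ⊆ N∖{i,j}), then players' cooperation choices are exchangeable under p, i.e., p(S) = p(S') whenever |S| = |S'|. -/

import Mathlib

open Finset

variable {n : ℕ}

/-- The set of players of `S` that precede `i` under the ordering `π`
(player `j` precedes `i` iff `π.symm j < π.symm i`). -/
def yesSet (π : Equiv.Perm (Fin n)) (S : Finset (Fin n)) (i : Fin n) : Finset (Fin n) :=
  S.filter (fun j => π.symm j < π.symm i)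

/-- The set of players of `N ∖ S` that precede `i` under the ordering `π`. -/
def noSet (π : Equiv.Perm (Fin n)) (S : Finset (Fin n)) (i : Fin n) : Finset (Fin n) :=
  Sᶜ.filter (fun j => π.symm j < π.symm i)

/-- The dual game `v*` of `v`:  `v*(T) = v(N) - v(N ∖ T)`. -/
noncomputable def dualGame (v : Finset (Fin n) → ℝ) (T : Finset (Fin n)) : ℝ :=
  v Finset.univ - v (Finset.univ \ T)

/-- The marginal contribution of player `i` in the roll call `(π, S)` for the game `v`. -/
noncomputable def marg (v : Finset (Fin n) → ℝ) (π : Equiv.Perm (Fin n)) (S : Finset (Fin n))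
    (i : Fin n) : ℝ :=
  if i ∈ S then v (insert i (yesSet π S i)) - v (yesSet π S i)
  else dualGame v (insert i (noSet π S i)) - dualGame v (noSet π S i)

/-- The generalized roll-call value `φ^p`. -/
noncomputable def phiP (p : Finset (Fin n) → ℝ) (v : Finset (Fin n) → ℝ) (i : Fin n) : ℝ :=
  (1 / (n.factorial : ℝ)) *
    ∑ π : Equiv.Perm (Fin n), ∑ S : Finset (Fin n), p S * marg v π S i

/-- The Shapley value (permutation formula), where the set of players preceding `i`
in the ordering `π` is `{j | π.symm j < π.symm i}`. -/
noncomputable def shapley (v : Finset (Fin n) → ℝ) (i : Fin n) : ℝ :=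
  (1 / (n.factorial : ℝ)) *
    ∑ π : Equiv.Perm (Fin n),
      (v (insert i (Finset.univ.filter (fun j => π.symm j < π.symm i))) -
        v (Finset.univ.filter (fun j => π.symm j < π.symm i)))

-- auxiliary lemmas about images under a swap
lemma mem_image_swap (i j k : Fin n) (S : Finset (Fin n)) :
    k ∈ S.image (Equiv.swap i j) ↔ Equiv.swap i j k ∈ S := by
  constructor
  · rintro h
    rcases Finset.mem_image.1 h with ⟨a, ha, rfl⟩
    simpa [Equiv.swap_apply_self] using ha
  · intro h
    exact Finset.mem_image.2 ⟨_, h, Equiv.swap_apply_self _ _ _⟩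

lemma image_swap_image_swap (i j : Fin n) (S : Finset (Fin n)) :
    (S.image (Equiv.swap i j)).image (Equiv.swap i j) = S := by
  rw [Finset.image_image]
  have : (Equiv.swap i j) ∘ (Equiv.swap i j) = id := by
    funext x; simp [Function.comp, Equiv.swap_apply_self]
  rw [this, Finset.image_id]

lemma compl_image_swap (i j : Fin n) (S : Finset (Fin n)) :
    (S.image (Equiv.swap i j))ᶜ = Sᶜ.image (Equiv.swap i j) := by
  ext k
  rw [Finset.mem_compl, mem_image_swap, mem_image_swap, Finset.mem_compl]

lemma image_swap_eq_iff (i j : Fin n) (S T : Finset (Fin n)) :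
    S.image (Equiv.swap i j) = T ↔ S = T.image (Equiv.swap i j) := by
  constructor
  · rintro rfl; rw [image_swap_image_swap]
  · rintro rfl; rw [image_swap_image_swap]

lemma image_swap_of_mem (i j : Fin n) (S : Finset (Fin n)) (hi : i ∈ S) (hj : j ∈ S) :
    S.image (Equiv.swap i j) = S := by
  ext k
  rw [mem_image_swap]
  rcases eq_or_ne k i with rfl | hki
  · simp [Equiv.swap_apply_left, hi, hj]
  · rcases eq_or_ne k j with rfl | hkj
    · simp [Equiv.swap_apply_right, hi, hj]
    · rw [Equiv.swap_apply_of_ne_of_ne hki hkj]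

lemma image_swap_of_not_mem (i j : Fin n) (S : Finset (Fin n)) (hi : i ∉ S) (hj : j ∉ S) :
    S.image (Equiv.swap i j) = S := by
  ext k
  rw [mem_image_swap]
  rcases eq_or_ne k i with rfl | hki
  · simp [Equiv.swap_apply_left, hi, hj]
  · rcases eq_or_ne k j with rfl | hkj
    · simp [Equiv.swap_apply_right, hi, hj]
    · rw [Equiv.swap_apply_of_ne_of_ne hki hkj]

-- the reindexing lemma for marginal contributions
lemma marg_swap (i j : Fin n) (v : Finset (Fin n) → ℝ)
    (hv : ∀ X, v (X.image (Equiv.swap i j)) = v X)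
    (π : Equiv.Perm (Fin n)) (S : Finset (Fin n)) :
    marg v (Equiv.swap i j * π) (S.image (Equiv.swap i j)) j = marg v π S i := by
  have hsm : ∀ k, (Equiv.swap i j * π).symm k = π.symm (Equiv.swap i j k) := by
    intro k
    rw [Equiv.Perm.mul_def, Equiv.symm_trans_apply, Equiv.symm_swap]
  have hσj : Equiv.swap i j j = i := Equiv.swap_apply_right i j
  have hyes : yesSet (Equiv.swap i j * π) (S.image (Equiv.swap i j)) j
      = (yesSet π S i).image (Equiv.swap i j) := by
    ext k
    rw [yesSet, yesSet, Finset.mem_filter, mem_image_swap, mem_image_swap, Finset.mem_filter,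
      hsm, hsm, hσj]
  have hno : noSet (Equiv.swap i j * π) (S.image (Equiv.swap i j)) j
      = (noSet π S i).image (Equiv.swap i j) := by
    ext k
    rw [noSet, noSet, Finset.mem_filter, compl_image_swap, mem_image_swap, mem_image_swap,
      Finset.mem_filter, hsm, hsm, hσj]
  have hdual : ∀ X, dualGame v (X.image (Equiv.swap i j)) = dualGame v X := by
    intro X
    unfold dualGame
    have h1 : Finset.univ \ (X.image (Equiv.swap i j))
        = (Finset.univ \ X).image (Equiv.swap i j) := by
      rw [← Finset.compl_eq_univ_sdiff, ← Finset.compl_eq_univ_sdiff, compl_image_swap]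
    rw [h1, hv]
  have hmem : (j ∈ S.image (Equiv.swap i j)) ↔ i ∈ S := by rw [mem_image_swap, hσj]
  have hins : ∀ X : Finset (Fin n),
      insert j (X.image (Equiv.swap i j)) = (insert i X).image (Equiv.swap i j) := by
    intro X
    rw [Finset.image_insert, Equiv.swap_apply_left]
  unfold marg
  by_cases hiS : i ∈ S
  · rw [if_pos (hmem.2 hiS), if_pos hiS, hyes, hins, hv, hv]
  · rw [if_neg (fun h => hiS (hmem.1 h)), if_neg hiS, hno, hins, hdual, hdual]

-- reindexing sums
lemma sum_swap_eq (i j : Fin n) (p v : Finset (Fin n) → ℝ)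
    (hv : ∀ X, v (X.image (Equiv.swap i j)) = v X) :
    (∑ π : Equiv.Perm (Fin n), ∑ S : Finset (Fin n), p S * marg v π S j) =
      ∑ π : Equiv.Perm (Fin n), ∑ S : Finset (Fin n),
        p (S.image (Equiv.swap i j)) * marg v π S i := by
  let eS : Finset (Fin n) ≃ Finset (Fin n) :=
    ⟨fun S => S.image (Equiv.swap i j), fun S => S.image (Equiv.swap i j),
      image_swap_image_swap i j, image_swap_image_swap i j⟩
  refine (Fintype.sum_equiv (Equiv.mulLeft (Equiv.swap i j))
    (fun π => ∑ S : Finset (Fin n), p (S.image (Equiv.swap i j)) * marg v π S i)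
    (fun π => ∑ S : Finset (Fin n), p S * marg v π S j) ?_).symm
  intro π
  refine Fintype.sum_equiv eS _ _ ?_
  intro S
  show p (S.image (Equiv.swap i j)) * marg v π S i
      = p (S.image (Equiv.swap i j)) * marg v (Equiv.swap i j * π) (S.image (Equiv.swap i j)) j
  rw [marg_swap i j v hv π S]

lemma exists_perm_pred (A : Finset (Fin n)) (i : Fin n) (hi : i ∉ A) :
    ∃ π : Equiv.Perm (Fin n), ∀ k, (π.symm k < π.symm i ↔ k ∈ A) := by
  classical
  set L : List (Fin n) := A.sort (· ≤ ·) ++ i :: (Aᶜ.erase i).sort (· ≤ ·) with hL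
  have hiA : i ∈ Aᶜ := by simpa using hi
  have hnd : L.Nodup := by
    refine List.Nodup.append (Finset.sort_nodup _ _) ?_ ?_
    · refine List.nodup_cons.2 ⟨by simp, Finset.sort_nodup _ _⟩
    · intro x hx hx2
      have hxA : x ∈ A := by simpa using hx
      rcases List.mem_cons.1 hx2 with rfl | h
      · exact hi hxA
      · have : x ∈ Aᶜ.erase i := by simpa using h
        simp [Finset.mem_erase, Finset.mem_compl] at this
        exact this.2 hxA
  have hmem : ∀ x : Fin n, x ∈ L := by
    intro x
    by_cases hx : x ∈ A
    · exact List.mem_append.2 (Or.inl (by simpa using hx))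
    · by_cases hxi : x = i
      · subst hxi; exact List.mem_append.2 (Or.inr List.mem_cons_self)
      · refine List.mem_append.2 (Or.inr (List.mem_cons.2 (Or.inr ?_)))
        simp [Finset.mem_erase, Finset.mem_compl, hxi, hx]
  have hlen : L.length = n := by
    have := Finset.length_sort (α := Fin n) (· ≤ ·) (s := A)
    have hcard : A.card + ((Aᶜ.erase i).card + 1) = n := by
      have h1 : (Aᶜ.erase i).card + 1 = Aᶜ.card := Finset.card_erase_add_one hiA
      have h2 : A.card + Aᶜ.card = n := by
        simpa using Finset.card_add_card_compl A
      omega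
    simpa [hL] using hcard
  let e : Fin L.length ≃ Fin n := hnd.getEquivOfForallMemList L hmem
  refine ⟨(finCongr hlen.symm).trans e, ?_⟩
  have hsymm : ∀ k : Fin n, (((finCongr hlen.symm).trans e).symm k : ℕ) = L.idxOf k := by
    intro k
    simp [e, List.Nodup.getEquivOfForallMemList, finCongr]
  have hidxi : L.idxOf i = A.card := by
    rw [hL, List.idxOf_append_of_notMem (by simpa using hi)]
    simp
  intro k
  rw [Fin.lt_def, hsymm, hsymm, hidxi]
  constructor
  · intro h
    by_contra hk
    have : L.idxOf k = (A.sort (· ≤ ·)).length + (i :: (Aᶜ.erase i).sort (· ≤ ·)).idxOf k := by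
      rw [hL]; exact List.idxOf_append_of_notMem (by simpa using hk)
    simp at this
    omega
  · intro hk
    have : L.idxOf k = (A.sort (· ≤ ·)).idxOf k := by
      rw [hL]; exact List.idxOf_append_of_mem (by simpa using hk)
    have hlt : (A.sort (· ≤ ·)).idxOf k < (A.sort (· ≤ ·)).length :=
      List.idxOf_lt_length_iff.2 (by simpa using hk)
    simp at hlt
    omega

-- the indicator game of a coalition T
noncomputable def eGame (T : Finset (Fin n)) : Finset (Fin n) → ℝ :=
  fun X => if X = T then 1 else 0

lemma eGame_swap_inv (i j : Fin n) (T : Finset (Fin n)) (hi : i ∈ T) (hj : j ∈ T) :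
    ∀ X, eGame T (X.image (Equiv.swap i j)) = eGame T X := by
  intro X
  unfold eGame
  have : (X.image (Equiv.swap i j) = T) ↔ (X = T) := by
    rw [image_swap_eq_iff, image_swap_of_mem i j T hi hj]
  by_cases h : X = T
  · rw [if_pos h, if_pos (this.2 h)]
  · rw [if_neg h, if_neg (fun hh => h (this.1 hh))]

lemma marg_eGame_A (i j : Fin n) (T S : Finset (Fin n)) (π : Equiv.Perm (Fin n))
    (hij : i ≠ j) (hiT : i ∈ T) (hjT : j ∈ T) (hiS : i ∈ S) (hjS : j ∉ S) :
    marg (eGame T) π S i = 0 := by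
  have hiY : i ∉ yesSet π S i := by
    simp [yesSet]
  rw [marg, if_pos hiS]
  have h1 : (insert i (yesSet π S i) ≠ T) := by
    intro h
    have : j ∈ insert i (yesSet π S i) := h ▸ hjT
    rcases Finset.mem_insert.1 this with h' | h'
    · exact hij h'.symm
    · exact hjS (Finset.mem_filter.1 h').1
  have h2 : yesSet π S i ≠ T := by
    intro h
    exact hiY (h ▸ hiT)
  show (if insert i (yesSet π S i) = T then (1:ℝ) else 0) - (if yesSet π S i = T then 1 else 0) = 0
  rw [if_neg h1, if_neg h2, sub_zero]

lemma marg_eGame_B (i : Fin n) (T S : Finset (Fin n)) (π : Equiv.Perm (Fin n))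
    (hiT : i ∈ T) (hiS : i ∉ S) :
    marg (eGame T) π S i = if noSet π S i = Finset.univ \ T then 1 else 0 := by
  rw [marg, if_neg hiS]
  unfold dualGame eGame
  have h2 : Finset.univ \ insert i (noSet π S i) ≠ T := by
    intro h
    have : i ∉ Finset.univ \ insert i (noSet π S i) := by simp
    exact this (h ▸ hiT)
  have h1 : (Finset.univ \ noSet π S i = T) ↔ (noSet π S i = Finset.univ \ T) := by
    constructor
    · rintro rfl
      rw [Finset.sdiff_sdiff_eq_self (Finset.subset_univ _)]
    · intro h
      rw [h, Finset.sdiff_sdiff_eq_self (Finset.subset_univ _)]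
  rw [if_neg h2]
  by_cases h : noSet π S i = Finset.univ \ T
  · rw [if_pos (h1.2 h), if_pos h]; ring
  · rw [if_neg (fun hh => h (h1.1 hh)), if_neg h]; ring

lemma constraint_lemma (p : Finset (Fin n) → ℝ)
    (hsym : ∀ v : Finset (Fin n) → ℝ, v ∅ = 0 → ∀ i j : Fin n,
      (∀ S : Finset (Fin n), i ∉ S → j ∉ S → v (insert i S) = v (insert j S)) →
      phiP p v i = phiP p v j)
    (i j : Fin n) (T : Finset (Fin n)) (hiT : i ∈ T) (hjT : j ∈ T) :
    ∑ S : Finset (Fin n),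
      (p S - p (S.image (Equiv.swap i j))) * (∑ π : Equiv.Perm (Fin n), marg (eGame T) π S i)
      = 0 := by
  have hinv := eGame_swap_inv i j T hiT hjT
  have h0 : eGame T ∅ = 0 := by
    rw [eGame, if_neg]
    intro h
    rw [← h] at hiT
    exact Finset.notMem_empty i hiT
  have hequiv : ∀ S : Finset (Fin n), i ∉ S → j ∉ S →
      eGame T (insert i S) = eGame T (insert j S) := by
    intro S hiS hjS
    have : (insert i S).image (Equiv.swap i j) = insert j S := by
      rw [Finset.image_insert, Equiv.swap_apply_left, image_swap_of_not_mem i j S hiS hjS]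
    rw [← this, hinv]
  have hphi := hsym (eGame T) h0 i j hequiv
  rw [phiP, phiP] at hphi
  have hfac : (1 / (n.factorial : ℝ)) ≠ 0 := by
    simp [Nat.factorial_ne_zero]
  have hAB := mul_left_cancel₀ hfac hphi
  rw [sum_swap_eq i j p (eGame T) hinv] at hAB
  have hswap : ∀ q : Finset (Fin n) → ℝ,
      (∑ π : Equiv.Perm (Fin n), ∑ S : Finset (Fin n), q S * marg (eGame T) π S i)
        = ∑ S : Finset (Fin n), q S * (∑ π : Equiv.Perm (Fin n), marg (eGame T) π S i) := by
    intro q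
    rw [Finset.sum_comm]
    exact Finset.sum_congr rfl fun S _ => (Finset.mul_sum _ _ _).symm
  rw [hswap, hswap] at hAB
  have : ∑ S : Finset (Fin n),
      ((p S) * (∑ π : Equiv.Perm (Fin n), marg (eGame T) π S i)
        - (p (S.image (Equiv.swap i j))) * (∑ π : Equiv.Perm (Fin n), marg (eGame T) π S i))
      = 0 := by
    rw [Finset.sum_sub_distrib, hAB, sub_self]
  rw [← this]
  exact Finset.sum_congr rfl fun S _ => (sub_mul _ _ _)

lemma key_lemma (p : Finset (Fin n) → ℝ)
    (hsym : ∀ v : Finset (Fin n) → ℝ, v ∅ = 0 → ∀ i j : Fin n,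
      (∀ S : Finset (Fin n), i ∉ S → j ∉ S → v (insert i S) = v (insert j S)) →
      phiP p v i = phiP p v j)
    (i j : Fin n) (hij : i ≠ j) :
    ∀ m : ℕ, ∀ S : Finset (Fin n), S.card = m → j ∈ S → i ∉ S →
      p S = p (S.image (Equiv.swap i j)) := by
  intro m
  induction m using Nat.strong_induction_on with
  | _ m IH =>
    intro S hcard hjS hiS
    set T : Finset (Fin n) := insert i S with hT
    have hiT : i ∈ T := Finset.mem_insert_self i S
    have hjT : j ∈ T := Finset.mem_insert_of_mem hjS
    have hcon := constraint_lemma p hsym i j T hiT hjT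
    -- all terms except S vanish
    have hsingle : ∑ S' : Finset (Fin n),
        (p S' - p (S'.image (Equiv.swap i j)))
          * (∑ π : Equiv.Perm (Fin n), marg (eGame T) π S' i)
        = (p S - p (S.image (Equiv.swap i j)))
          * (∑ π : Equiv.Perm (Fin n), marg (eGame T) π S i) := by
      refine Finset.sum_eq_single_of_mem S (Finset.mem_univ S) ?_
      intro b _ hbS
      by_cases hib : i ∈ b
      · by_cases hjb : j ∈ b
        · rw [image_swap_of_mem i j b hib hjb, sub_self, zero_mul]
        · have : (∑ π : Equiv.Perm (Fin n), marg (eGame T) π b i) = 0 := by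
            refine Finset.sum_eq_zero fun π _ => ?_
            exact marg_eGame_A i j T b π hij hiT hjT hib hjb
          rw [this, mul_zero]
      · by_cases hjb : j ∈ b
        · by_cases hsub : b ⊆ T
          · -- b ⊊ S, use induction hypothesis
            have hbS' : b ⊆ S := by
              rw [hT] at hsub
              exact (Finset.subset_insert_iff_of_notMem hib).1 hsub
            have hlt : b.card < m := by
              rw [← hcard]
              exact Finset.card_lt_card (Finset.ssubset_iff_subset_ne.2 ⟨hbS', hbS⟩)
            rw [IH b.card hlt b rfl hjb hib, sub_self, zero_mul]
          · have : (∑ π : Equiv.Perm (Fin n), marg (eGame T) π b i) = 0 := by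
              refine Finset.sum_eq_zero fun π _ => ?_
              rw [marg_eGame_B i T b π hiT hib, if_neg]
              intro h
              rcases Finset.not_subset.1 hsub with ⟨x, hxb, hxT⟩
              have hx1 : x ∈ Finset.univ \ T := by simp [hxT]
              have hx2 : x ∈ noSet π b i := h ▸ hx1
              exact (Finset.mem_compl.1 (Finset.mem_filter.1 hx2).1) hxb
            rw [this, mul_zero]
        · rw [image_swap_of_not_mem i j b hib hjb, sub_self, zero_mul]
    rw [hsingle] at hcon
    -- positivity of the coefficient
    have hipos : i ∉ Finset.univ \ T := by simp [hiT]
    obtain ⟨π₀, hπ₀⟩ := exists_perm_pred (Finset.univ \ T) i (by simpa using hipos)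
    have hno : noSet π₀ S i = Finset.univ \ T := by
      ext x
      rw [noSet, Finset.mem_filter, Finset.mem_compl]
      constructor
      · rintro ⟨_, hx⟩
        exact (hπ₀ x).1 hx
      · intro hx
        have hxT : x ∉ T := (Finset.mem_sdiff.1 hx).2
        exact ⟨fun hxS => hxT (Finset.mem_insert_of_mem hxS), (hπ₀ x).2 hx⟩
    have hpos : 0 < ∑ π : Equiv.Perm (Fin n), marg (eGame T) π S i := by
      refine Finset.sum_pos' (fun π _ => ?_) ⟨π₀, Finset.mem_univ π₀, ?_⟩
      · rw [marg_eGame_B i T S π hiT hiS]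
        positivity
      · rw [marg_eGame_B i T S π₀ hiT hiS, if_pos hno]
        norm_num
    have := mul_eq_zero.1 hcon
    rcases this with h | h
    · linarith [sub_eq_zero.1 h]
    · exact absurd h (ne_of_gt hpos)

lemma swap_invariant (p : Finset (Fin n) → ℝ)
    (hsym : ∀ v : Finset (Fin n) → ℝ, v ∅ = 0 → ∀ i j : Fin n,
      (∀ S : Finset (Fin n), i ∉ S → j ∉ S → v (insert i S) = v (insert j S)) →
      phiP p v i = phiP p v j)
    (i j : Fin n) (S : Finset (Fin n)) : p (S.image (Equiv.swap i j)) = p S := by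
  rcases eq_or_ne i j with rfl | hij
  · rw [Equiv.swap_self]
    simp
  by_cases hiS : i ∈ S
  · by_cases hjS : j ∈ S
    · rw [image_swap_of_mem i j S hiS hjS]
    · -- i ∈ S, j ∉ S : apply key lemma to S.image swap
      have hjS' : j ∈ S.image (Equiv.swap i j) := by
        rw [mem_image_swap, Equiv.swap_apply_right]; exact hiS
      have hiS' : i ∉ S.image (Equiv.swap i j) := by
        rw [mem_image_swap, Equiv.swap_apply_left]; exact hjS
      have := key_lemma p hsym i j hij (S.image (Equiv.swap i j)).card
        (S.image (Equiv.swap i j)) rfl hjS' hiS'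
      rw [image_swap_image_swap] at this
      exact this
  · by_cases hjS : j ∈ S
    · exact (key_lemma p hsym i j hij S.card S rfl hjS hiS).symm
    · rw [image_swap_of_not_mem i j S hiS hjS]

theorem exchangeable_of_phiP_symmetric' (hn : 0 < n) (p : Finset (Fin n) → ℝ)
    (hp0 : ∀ S, 0 ≤ p S) (hp1 : ∑ S : Finset (Fin n), p S = 1)
    (hsym : ∀ v : Finset (Fin n) → ℝ, v ∅ = 0 → ∀ i j : Fin n,
      (∀ S : Finset (Fin n), i ∉ S → j ∉ S → v (insert i S) = v (insert j S)) →
      phiP p v i = phiP p v j) :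
    ∀ S S' : Finset (Fin n), S.card = S'.card → p S = p S' := by
  have main : ∀ k : ℕ, ∀ S S' : Finset (Fin n), (S \ S').card = k → S.card = S'.card →
      p S = p S' := by
    intro k
    induction k with
    | zero =>
      intro S S' hk hcard
      have hsub : S ⊆ S' := by
        rw [← Finset.sdiff_eq_empty_iff_subset]
        exact Finset.card_eq_zero.1 hk
      rw [Finset.eq_of_subset_of_card_le hsub (le_of_eq hcard.symm)]
    | succ k IH =>
      intro S S' hk hcard
      have ha : (S \ S').Nonempty := by
        rw [← Finset.card_pos, hk]; omega
      obtain ⟨a, haSS'⟩ := ha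
      have haS : a ∈ S := (Finset.mem_sdiff.1 haSS').1
      have haS' : a ∉ S' := (Finset.mem_sdiff.1 haSS').2
      have hb : (S' \ S).Nonempty := by
        rcases Finset.eq_empty_or_nonempty (S' \ S) with h | h
        · exfalso
          have : S' ⊆ S := Finset.sdiff_eq_empty_iff_subset.1 h
          have : S' = S := Finset.eq_of_subset_of_card_le this (le_of_eq hcard)
          rw [this, Finset.sdiff_self, Finset.card_empty] at hk
          omega
        · exact h
      obtain ⟨b, hbS'S⟩ := hb
      have hbS' : b ∈ S' := (Finset.mem_sdiff.1 hbS'S).1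
      have hbS : b ∉ S := (Finset.mem_sdiff.1 hbS'S).2
      have hab : a ≠ b := fun h => hbS (h ▸ haS)
      set S₂ : Finset (Fin n) := S.image (Equiv.swap a b) with hS₂
      have hS₂eq : S₂ = insert b (S.erase a) := by
        ext x
        rw [hS₂, mem_image_swap, Finset.mem_insert, Finset.mem_erase]
        rcases eq_or_ne x a with rfl | hxa
        · rw [Equiv.swap_apply_left]
          simp [hab, hbS]
        · rcases eq_or_ne x b with rfl | hxb
          · rw [Equiv.swap_apply_right]
            simp [haS]
          · rw [Equiv.swap_apply_of_ne_of_ne hxa hxb]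
            simp [hxa, hxb]
      have hcard₂ : S₂.card = S.card := by
        rw [hS₂]
        exact Finset.card_image_of_injective S (Equiv.injective _)
      have hsd : (S₂ \ S').card = k := by
        rw [hS₂eq, Finset.insert_sdiff_of_mem _ hbS']
        have : S.erase a \ S' = (S \ S').erase a := by
          ext x
          simp only [Finset.mem_sdiff, Finset.mem_erase]
          tauto
        rw [this, Finset.card_erase_of_mem haSS', hk]
        omega
      have := IH S₂ S' hsd (hcard₂.trans hcard)
      rw [← this, hS₂]
      exact (swap_invariant p hsym a b S).symm
  intro S S' hcard
  exact main (S \ S').card S S' rfl hcard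

/-- If `φ^p` is symmetric (equal values for equivalent players in every
coalitional game), then cooperation choices are exchangeable under `p`. -/
theorem exchangeable_of_phiP_symmetric (hn : 0 < n) (p : Finset (Fin n) → ℝ)
    (hp0 : ∀ S, 0 ≤ p S) (hp1 : ∑ S : Finset (Fin n), p S = 1)
    (hsym : ∀ v : Finset (Fin n) → ℝ, v ∅ = 0 → ∀ i j : Fin n,
      (∀ S : Finset (Fin n), i ∉ S → j ∉ S → v (insert i S) = v (insert j S)) →
      phiP p v i = phiP p v j) :
    ∀ S S' : Finset (Fin n), S.card = S'.card → p S = p S' :=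
  exchangeable_of_phiP_symmetric' hn p hp0 hp1 hsym
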